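/- arXiv:2512.15797 — 3 statements merged into one kernel-verified Lean document; each statement's English description precedes it below -/
import Mathlib

section
/- For every integer n ≥ 2, the function x ↦ T_cos (2n) x is positive and strictly decreasing on the interval (0, ∞), and it is concave on the interval (0, π). -/
/-- The normalized remainder of the Maclaurin series of cosine; `Tcos m` is `T_cos (2m)`
of the natural-language statement. -/
noncomputable def Tcos (m : ℕ) (x : ℝ) : ℝ :=
  if x = 0 then 1
  else (-1 : ℝ) ^ m * (Nat.factorial (2 * m)) / x ^ (2 * m) *
    (Real.cos x - ∑ k ∈ Finset.range m, (-1 : ℝ) ^ k * x ^ (2 * k) / (Nat.factorial (2 * k)))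

/-!
`Tcos n x = (2n)! * cosRemainder (2n) x / x^(2n)`, where `cosRemainder j` is the `j`-fold
primitive of `cos` vanishing at `0`. Along a sequence of functions each of which is the primitive
of the previous one vanishing at `0`, a strict sign of one term on `(0, b)` passes to all later
terms on `(0, b]`. The numerators `x f a x - (a + 1 + c) f (a + 1) x` of the derivatives of
`f (a + 1) x / x^(a + 1 + c)` form again such a sequence, so the signs of the first and second
derivatives of `cosRemainder a x / x^a` are settled by one low-index term each:
`x cos x < sin x` on `(0, π)`, and, after substituting `x = 2u`, `tan u > 3u / (3 - u^2)` on
`(0, π/2)`. Positivity follows in the same way from `x - sin x > 0`.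
-/

open Real Set
open scoped Nat

theorem pos_of_hasDerivAt_of_pos {f f' : ℝ → ℝ} {b : ℝ} (hf : ∀ x, HasDerivAt f (f' x) x)
    (h0 : f 0 = 0) (hf' : ∀ x ∈ Ioo 0 b, 0 < f' x) : ∀ x ∈ Ioc 0 b, 0 < f x := by
  have hmono : StrictMonoOn f (Icc 0 b) :=
    strictMonoOn_of_hasDerivWithinAt_pos (convex_Icc 0 b)
      (fun x _ => (hf x).continuousAt.continuousWithinAt)
      (fun x _ => (hf x).hasDerivWithinAt) (by simpa only [interior_Icc] using hf')
  intro x hx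
  simpa only [h0] using hmono (left_mem_Icc.2 (hx.1.le.trans hx.2)) (Ioc_subset_Icc_self hx) hx.1

structure IsPrimitiveChain (f : ℕ → ℝ → ℝ) : Prop where
  hasDerivAt : ∀ a x, HasDerivAt (f (a + 1)) (f a x) x
  apply_succ_zero : ∀ a, f (a + 1) 0 = 0

/-- The numerator of the derivative of `x ↦ f (a + 1) x / x ^ (a + 1 + c)`. -/
def divPowNum (c : ℕ) (f : ℕ → ℝ → ℝ) (a : ℕ) (x : ℝ) : ℝ :=
  x * f a x - (a + 1 + c) * f (a + 1) x

namespace IsPrimitiveChain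

variable {f : ℕ → ℝ → ℝ}

theorem neg (hf : IsPrimitiveChain f) : IsPrimitiveChain (-f) where
  hasDerivAt a x := (hf.hasDerivAt a x).neg
  apply_succ_zero a := by simp [hf.apply_succ_zero a]

theorem pos_of_pos_Ioo (hf : IsPrimitiveChain f) {a : ℕ} {b : ℝ}
    (ha : ∀ x ∈ Ioo 0 b, 0 < f a x) {c : ℕ} (hc : a < c) : ∀ x ∈ Ioc 0 b, 0 < f c x := by
  induction c, hc using Nat.le_induction with
  | base => exact pos_of_hasDerivAt_of_pos (hf.hasDerivAt a) (hf.apply_succ_zero a) ha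
  | succ c _ ih =>
    exact pos_of_hasDerivAt_of_pos (hf.hasDerivAt c) (hf.apply_succ_zero c)
      fun x hx => ih x (Ioo_subset_Ioc_self hx)

theorem pos_of_pos_Ioi (hf : IsPrimitiveChain f) {a : ℕ} (ha : ∀ x ∈ Ioi 0, 0 < f a x)
    {c : ℕ} (hc : a ≤ c) : ∀ x ∈ Ioi 0, 0 < f c x := by
  rcases hc.eq_or_lt with rfl | hc
  · exact ha
  · exact fun x hx => hf.pos_of_pos_Ioo (fun y hy => ha y hy.1) hc x ⟨hx, le_rfl⟩

theorem neg_of_neg_Ioo (hf : IsPrimitiveChain f) {a : ℕ} {b : ℝ}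
    (ha : ∀ x ∈ Ioo 0 b, f a x < 0) {c : ℕ} (hc : a < c) : ∀ x ∈ Ioc 0 b, f c x < 0 :=
  fun x hx => neg_pos.1 <| hf.neg.pos_of_pos_Ioo (fun y hy => neg_pos.2 (ha y hy)) hc x hx

theorem neg_of_neg_Ioi (hf : IsPrimitiveChain f) {a : ℕ} (ha : ∀ x ∈ Ioi 0, f a x < 0)
    {c : ℕ} (hc : a ≤ c) : ∀ x ∈ Ioi 0, f c x < 0 :=
  fun x hx => neg_pos.1 <| hf.neg.pos_of_pos_Ioi (fun y hy => neg_pos.2 (ha y hy)) hc x hx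

theorem divPowNum (hf : IsPrimitiveChain f) (c : ℕ) : IsPrimitiveChain (divPowNum c f) where
  hasDerivAt a x := by
    refine (((hasDerivAt_id' x).fun_mul (hf.hasDerivAt a x)).fun_sub
      ((hf.hasDerivAt (a + 1) x).const_mul (((a + 1 : ℕ) : ℝ) + 1 + c))).congr_deriv ?_
    simp only [_root_.divPowNum]
    push_cast
    ring
  apply_succ_zero a := by simp [_root_.divPowNum, hf.apply_succ_zero]

theorem hasDerivAt_div_pow (hf : IsPrimitiveChain f) (c a : ℕ) {x : ℝ} (hx : x ≠ 0) :
    HasDerivAt (fun y => f (a + 1) y / y ^ (a + 1 + c))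
      (_root_.divPowNum c f a x / x ^ (a + 1 + c + 1)) x := by
  refine ((hf.hasDerivAt a x).fun_div (hasDerivAt_pow (a + 1 + c) x)
    (pow_ne_zero _ hx)).congr_deriv ?_
  rw [show a + 1 + c - 1 = a + c by omega, _root_.divPowNum]
  field_simp
  push_cast
  ring

end IsPrimitiveChain

noncomputable def cosRemainder : ℕ → ℝ → ℝ
  | 0, x => cos x
  | 1, x => sin x
  | j + 2, x => x ^ j / (j ! : ℝ) - cosRemainder j x

theorem cosRemainder_two_mul (m : ℕ) (x : ℝ) :
    cosRemainder (2 * m) x =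
      (-1) ^ m * (cos x - ∑ k ∈ Finset.range m, (-1) ^ k * x ^ (2 * k) / (2 * k)!) := by
  induction m with
  | zero => simp [cosRemainder]
  | succ m ih =>
    have h : ((-1 : ℝ) ^ m) * (-1) ^ m = 1 := by rw [← mul_pow]; norm_num
    rw [show 2 * (m + 1) = 2 * m + 2 by ring, cosRemainder, ih, Finset.sum_range_succ]
    linear_combination (-(x ^ (2 * m) / (2 * m)! : ℝ)) * h

theorem hasDerivAt_cosRemainder : ∀ a x, HasDerivAt (cosRemainder (a + 1)) (cosRemainder a x) x
  | 0, x => hasDerivAt_sin x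
  | 1, x => by simpa [cosRemainder] using (hasDerivAt_cos x).const_sub 1
  | j + 2, x => by
    refine (((hasDerivAt_pow (j + 1) x).div_const ((j + 1)! : ℝ)).fun_sub
      (hasDerivAt_cosRemainder j x)).congr_deriv ?_
    rw [cosRemainder, Nat.add_sub_cancel, Nat.factorial_succ]
    push_cast
    field_simp

theorem cosRemainder_succ_zero : ∀ a, cosRemainder (a + 1) 0 = 0
  | 0 => by simp [cosRemainder]
  | 1 => by simp [cosRemainder]
  | j + 2 => by simp [cosRemainder, cosRemainder_succ_zero j]

theorem isPrimitiveChain_cosRemainder : IsPrimitiveChain cosRemainder :=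
  ⟨hasDerivAt_cosRemainder, cosRemainder_succ_zero⟩

theorem cosRemainder_pos {a : ℕ} (ha : 3 ≤ a) {x : ℝ} (hx : 0 < x) : 0 < cosRemainder a x :=
  isPrimitiveChain_cosRemainder.pos_of_pos_Ioi
    (fun y hy => by simpa [cosRemainder] using sin_lt (mem_Ioi.1 hy)) ha x hx

theorem mul_cos_lt_sin {x : ℝ} (hx₀ : 0 < x) (hxπ : x ≤ π) : x * cos x < sin x := by
  have h := pos_of_hasDerivAt_of_pos (f := fun x => sin x - x * cos x) (f' := fun x => x * sin x)
    (fun y => ((hasDerivAt_sin y).fun_sub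
      ((hasDerivAt_id' y).fun_mul (hasDerivAt_cos y))).congr_deriv (by ring))
    (by simp) (fun y hy => mul_pos hy.1 (sin_pos_of_pos_of_lt_pi hy.1 hy.2)) x ⟨hx₀, hxπ⟩
  simpa only [sub_pos] using h

theorem three_mul_mul_cos_lt_three_sub_sq_mul_sin {x : ℝ} (hx₀ : 0 < x) (hx : x ≤ π / 2) :
    3 * x * cos x < (3 - x ^ 2) * sin x := by
  have h := pos_of_hasDerivAt_of_pos (f := fun x => (3 - x ^ 2) * sin x - 3 * x * cos x)
    (f' := fun x => x * (sin x - x * cos x))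
    (fun y => ((((hasDerivAt_pow 2 y).const_sub 3).fun_mul (hasDerivAt_sin y)).fun_sub
      (((hasDerivAt_id' y).const_mul 3).fun_mul (hasDerivAt_cos y))).congr_deriv (by ring))
    (by simp)
    (fun y hy => mul_pos hy.1 (sub_pos.2 (mul_cos_lt_sin hy.1 (by linarith [hy.2, pi_pos]))))
    x ⟨hx₀, hx⟩
  simpa only [sub_pos] using h

theorem divPowNum_cosRemainder_neg {a : ℕ} (ha : 2 ≤ a) {x : ℝ} (hx : 0 < x) :
    divPowNum 0 cosRemainder a x < 0 := by
  have hchain := isPrimitiveChain_cosRemainder.divPowNum 0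
  have hzero : ∀ y ∈ Ioo 0 π, divPowNum 0 cosRemainder 0 y < 0 := fun y hy => by
    simp [divPowNum, cosRemainder, mul_cos_lt_sin hy.1 hy.2.le]
  have htwo : ∀ y ∈ Ioi 0, divPowNum 0 cosRemainder 2 y < 0 := by
    intro y hy
    rcases le_or_gt y π with hyπ | hyπ
    · exact hchain.neg_of_neg_Ioo hzero two_pos y ⟨hy, hyπ⟩
    · simp only [divPowNum, cosRemainder]
      push_cast
      nlinarith [neg_one_le_cos y, sin_le_one y, pi_gt_three]
  exact hchain.neg_of_neg_Ioi htwo ha x hx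

theorem divPowNum_divPowNum_cosRemainder_neg {a : ℕ} (ha : 1 ≤ a) {x : ℝ}
    (hx : x ∈ Ioo 0 π) : divPowNum 2 (divPowNum 0 cosRemainder) a x < 0 := by
  have hchain := (isPrimitiveChain_cosRemainder.divPowNum 0).divPowNum 2
  have hone : ∀ y ∈ Ioo 0 π, divPowNum 2 (divPowNum 0 cosRemainder) 1 y < 0 := by
    intro y hy
    obtain ⟨u, rfl⟩ : ∃ u, y = 2 * u := ⟨y / 2, by ring⟩
    have hu₀ : 0 < u := by linarith [hy.1]
    have huπ : u < π / 2 := by linarith [hy.2]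
    have hcos : 0 < cos u := cos_pos_of_mem_Ioo ⟨by linarith, huπ⟩
    have key := three_mul_mul_cos_lt_three_sub_sq_mul_sin hu₀ huπ.le
    have hexpand : divPowNum 2 (divPowNum 0 cosRemainder) 1 (2 * u) =
        -8 * cos u * ((3 - u ^ 2) * sin u - 3 * u * cos u) := by
      simp only [divPowNum, cosRemainder, sin_two_mul, cos_two_mul]
      push_cast
      ring
    rw [hexpand]
    nlinarith [mul_pos hcos (sub_pos.2 key)]
  rcases ha.eq_or_lt with rfl | ha
  · exact hone x hx
  · exact hchain.neg_of_neg_Ioo hone ha x ⟨hx.1, hx.2.le⟩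

theorem strictAntiOn_cosRemainder_div_pow {a : ℕ} (ha : 3 ≤ a) :
    StrictAntiOn (fun x => cosRemainder a x / x ^ a) (Ioi 0) := by
  obtain ⟨b, rfl⟩ : ∃ b, a = b + 1 := ⟨a - 1, by omega⟩
  have hderiv : ∀ x ∈ Ioi (0 : ℝ), HasDerivAt (fun x => cosRemainder (b + 1) x / x ^ (b + 1))
      (divPowNum 0 cosRemainder b x / x ^ (b + 2)) x :=
    fun x hx => isPrimitiveChain_cosRemainder.hasDerivAt_div_pow 0 b (ne_of_gt hx)
  refine strictAntiOn_of_hasDerivWithinAt_neg (convex_Ioi 0)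
    (f' := fun x => divPowNum 0 cosRemainder b x / x ^ (b + 2))
    (fun x hx => (hderiv x hx).continuousAt.continuousWithinAt) ?_ ?_ <;> rw [interior_Ioi]
  · exact fun x hx => (hderiv x hx).hasDerivWithinAt
  · exact fun x hx => div_neg_of_neg_of_pos (divPowNum_cosRemainder_neg (by omega) hx)
      (pow_pos hx _)

theorem concaveOn_cosRemainder_div_pow {a : ℕ} (ha : 3 ≤ a) :
    ConcaveOn ℝ (Ioo 0 π) (fun x => cosRemainder a x / x ^ a) := by
  obtain ⟨b, rfl⟩ : ∃ b, a = b + 2 := ⟨a - 2, by omega⟩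
  have hderiv : ∀ x ∈ Ioo 0 π, HasDerivAt (fun x => cosRemainder (b + 2) x / x ^ (b + 2))
      (divPowNum 0 cosRemainder (b + 1) x / x ^ (b + 3)) x :=
    fun x hx => isPrimitiveChain_cosRemainder.hasDerivAt_div_pow 0 (b + 1) (ne_of_gt hx.1)
  have hderiv2 : ∀ x ∈ Ioo 0 π,
      HasDerivAt (fun x => divPowNum 0 cosRemainder (b + 1) x / x ^ (b + 3))
        (divPowNum 2 (divPowNum 0 cosRemainder) b x / x ^ (b + 4)) x :=
    fun x hx => (isPrimitiveChain_cosRemainder.divPowNum 0).hasDerivAt_div_pow 2 b (ne_of_gt hx.1)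
  refine concaveOn_of_hasDerivWithinAt2_nonpos (convex_Ioo 0 π)
    (f' := fun x => divPowNum 0 cosRemainder (b + 1) x / x ^ (b + 3))
    (f'' := fun x => divPowNum 2 (divPowNum 0 cosRemainder) b x / x ^ (b + 4))
    (fun x hx => (hderiv x hx).continuousAt.continuousWithinAt) ?_ ?_ ?_ <;> rw [interior_Ioo]
  · exact fun x hx => (hderiv x hx).hasDerivWithinAt
  · exact fun x hx => (hderiv2 x hx).hasDerivWithinAt
  · exact fun x hx => (div_neg_of_neg_of_pos (divPowNum_divPowNum_cosRemainder_neg (by omega) hx)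
      (pow_pos hx.1 _)).le

theorem Tcos_eq_factorial_mul_cosRemainder_div_pow (n : ℕ) {x : ℝ} (hx : x ≠ 0) :
    Tcos n x = (2 * n)! * (cosRemainder (2 * n) x / x ^ (2 * n)) := by
  rw [Tcos, if_neg hx, cosRemainder_two_mul]
  ring

theorem Tcos_pos_strictAnti_concave (n : ℕ) (hn : 2 ≤ n) :
    (∀ x ∈ Set.Ioi (0:ℝ), 0 < Tcos n x) ∧
    StrictAntiOn (Tcos n) (Set.Ioi (0:ℝ)) ∧
    ConcaveOn ℝ (Set.Ioo 0 Real.pi) (Tcos n) := by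
  have ha : 3 ≤ 2 * n := by omega
  have hfact : (0 : ℝ) < (2 * n)! := by positivity
  have hT : EqOn (Tcos n) (fun x => (2 * n)! * (cosRemainder (2 * n) x / x ^ (2 * n))) (Ioi 0) :=
    fun x hx => Tcos_eq_factorial_mul_cosRemainder_div_pow n (ne_of_gt hx)
  refine ⟨fun x hx => ?_, fun x hx y hy hxy => ?_, ?_⟩
  · rw [hT hx]
    exact mul_pos hfact (div_pos (cosRemainder_pos ha hx) (pow_pos hx _))
  · rw [hT hx, hT hy]
    exact mul_lt_mul_of_pos_left (strictAntiOn_cosRemainder_div_pow ha hx hy hxy) hfact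
  · exact ((concaveOn_cosRemainder_div_pow ha).smul hfact.le).congr fun x hx => (hT hx.1).symm
end

section
/- For every integer n ≥ 2 and every real x > 0, the double inequality n(2n+1)/((n+1)(2n+3)) < T_sin n x / T_sin (n+1) x < 1 holds. -/
/-- The `n`-th normalized remainder of the Maclaurin series of sine. -/
noncomputable def Tsin (n : ℕ) (x : ℝ) : ℝ :=
  if x = 0 then 1
  else (-1 : ℝ) ^ n * (Nat.factorial (2 * n + 1)) / x ^ (2 * n + 1) *
    (Real.sin x - ∑ k ∈ Finset.range n, (-1 : ℝ) ^ k * x ^ (2 * k + 1) / (Nat.factorial (2 * k + 1)))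

/-!
Write `ρₘ = sinRem m` and `σₘ = cosRem m` for the signed remainders of the sine and cosine
series, so that `Tsin m x = (2m+1)! ρₘ x / x^(2m+1)`. They satisfy `ρₘ' = σₘ`, `σₘ₊₁' = ρₘ`
and vanish at `0`, whence `ρₘ > 0` (`m ≥ 1`) and `σₘ > 0` (`m ≥ 2`) on `(0, ∞)`.
The two bounds read `2n(2n+1) ρₙ₊₁ < x² ρₙ < (2n+2)(2n+3) ρₙ₊₁`, and the right one is the
left one at `n + 1`, rewritten with `ρₙ₊₁ + ρₙ₊₂ = x^(2n+3)/(2n+3)!`. For the left one,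
`u = x² ρₙ - 2n(2n+1) ρₙ₊₁` solves `u'' + u = h` with `h = 2ρₙ + 4xσₙ`; `u`, `u'`, `h` vanish
at `0` and `h' = 6σₙ + 4xρₙ₋₁ > 0`, so `u x = ∫₀ˣ h' t (1 - cos (x - t)) dt > 0`.
-/
open Real Set
open scoped Nat

lemma pos_of_hasDerivAt_of_pos_s7 {f f' : ℝ → ℝ} (hf : ∀ t, HasDerivAt f (f' t) t) (hf0 : f 0 = 0)
    (hf' : ∀ t, 0 < t → 0 < f' t) {x : ℝ} (hx : 0 < x) : 0 < f x := by
  have hmono : StrictMonoOn f (Ici 0) :=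
    strictMonoOn_of_hasDerivWithinAt_pos (convex_Ici 0)
      (HasDerivAt.continuousOn fun t _ => hf t) (fun t _ => (hf t).hasDerivWithinAt)
      (fun t ht => hf' t (by simpa using ht))
  simpa [hf0] using hmono self_mem_Ici hx.le hx

lemma pos_of_hasDerivAt_deriv_add_self_eq {u u' h h' : ℝ → ℝ}
    (hu : ∀ t, HasDerivAt u (u' t) t) (hu' : ∀ t, HasDerivAt u' (h t - u t) t)
    (hh : ∀ t, HasDerivAt h (h' t) t) (hu0 : u 0 = 0) (hu'0 : u' 0 = 0) (hh0 : h 0 = 0)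
    (hh' : ∀ t, 0 < t → 0 < h' t) {x : ℝ} (hx : 0 < x) : 0 < u x := by
  -- `G` is an antiderivative of `t ↦ h' t * (1 - cos (x - t))` with `G 0 = 0` and `G x = u x`
  -- (Duhamel's formula for `u`, integrated by parts).
  set G : ℝ → ℝ := fun t => u' t * sin (x - t) + u t * cos (x - t) + h t * (1 - cos (x - t))
  have hG : ∀ t, HasDerivAt G (h' t * (1 - cos (x - t))) t := by
    intro t
    have hs : HasDerivAt (fun t => sin (x - t)) (-cos (x - t)) t := by
      simpa using ((hasDerivAt_id t).const_sub x).sin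
    have hc : HasDerivAt (fun t => cos (x - t)) (sin (x - t)) t := by
      simpa using ((hasDerivAt_id t).const_sub x).cos
    exact ((((hu' t).mul hs).add ((hu t).mul hc)).add ((hh t).mul (hc.const_sub 1))).congr_deriv
      (by ring)
  have hGcont : ContinuousOn G univ := HasDerivAt.continuousOn fun t _ => hG t
  set a := max 0 (x - 2 * π)
  have ha : a ∈ Icc 0 x := ⟨le_max_left _ _, max_le hx.le (by linarith [pi_pos])⟩
  have hmono : MonotoneOn G (Icc 0 x) := by
    refine monotoneOn_of_hasDerivWithinAt_nonneg (convex_Icc 0 x) (hGcont.mono (subset_univ _))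
      (fun t _ => (hG t).hasDerivWithinAt) fun t ht => ?_
    rw [interior_Icc] at ht
    exact mul_nonneg (hh' t ht.1).le (by linarith [cos_le_one (x - t)])
  have hstrict : StrictMonoOn G (Icc a x) := by
    refine strictMonoOn_of_hasDerivWithinAt_pos (convex_Icc a x) (hGcont.mono (subset_univ _))
      (fun t _ => (hG t).hasDerivWithinAt) fun t ht => ?_
    rw [interior_Icc] at ht
    have hta : 0 < t ∧ x - 2 * π < t := max_lt_iff.1 ht.1
    have hcos : cos (x - t) < 1 := (cos_le_one _).lt_of_ne fun h1 => by
      have := (cos_eq_one_iff_of_lt_of_lt (by linarith [pi_pos, ht.2]) (by linarith)).1 h1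
      linarith [ht.2]
    exact mul_pos (hh' t hta.1) (by linarith)
  calc 0 = G 0 := by simp [G, hu0, hu'0, hh0]
    _ ≤ G a := hmono (left_mem_Icc.2 hx.le) ha ha.1
    _ < G x := hstrict (left_mem_Icc.2 ha.2) (right_mem_Icc.2 ha.2)
        (max_lt hx (by linarith [pi_pos]))
    _ = u x := by simp [G]

noncomputable def sinRem (m : ℕ) (x : ℝ) : ℝ :=
  (-1) ^ m * (sin x - ∑ k ∈ Finset.range m, (-1) ^ k * x ^ (2 * k + 1) / (2 * k + 1)!)

noncomputable def cosRem (m : ℕ) (x : ℝ) : ℝ :=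
  (-1) ^ m * (cos x - ∑ k ∈ Finset.range m, (-1) ^ k * x ^ (2 * k) / (2 * k)!)

lemma sinRem_zero (x : ℝ) : sinRem 0 x = sin x := by
  simp [sinRem]

lemma sinRem_succ (m : ℕ) (x : ℝ) :
    sinRem (m + 1) x = x ^ (2 * m + 1) / (2 * m + 1)! - sinRem m x := by
  have hsq : ((-1 : ℝ) ^ m) ^ 2 = 1 := by rw [← pow_mul]; exact Even.neg_one_pow ⟨m, by ring⟩
  rw [sinRem, sinRem, Finset.sum_range_succ, pow_succ]
  linear_combination (x ^ (2 * m + 1) / (2 * m + 1)!) * hsq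

lemma cosRem_succ (m : ℕ) (x : ℝ) :
    cosRem (m + 1) x = x ^ (2 * m) / (2 * m)! - cosRem m x := by
  have hsq : ((-1 : ℝ) ^ m) ^ 2 = 1 := by rw [← pow_mul]; exact Even.neg_one_pow ⟨m, by ring⟩
  rw [cosRem, cosRem, Finset.sum_range_succ, pow_succ]
  linear_combination (x ^ (2 * m) / (2 * m)!) * hsq

lemma hasDerivAt_pow_succ_div_factorial (k : ℕ) (x : ℝ) :
    HasDerivAt (fun y : ℝ => y ^ (k + 1) / (k + 1)!) (x ^ k / k !) x := by
  refine ((hasDerivAt_pow (k + 1) x).div_const _).congr_deriv ?_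
  rw [Nat.factorial_succ]
  push_cast
  field_simp

lemma hasDerivAt_sinRem (m : ℕ) (x : ℝ) : HasDerivAt (sinRem m) (cosRem m x) x := by
  induction m generalizing x with
  | zero => simpa [funext sinRem_zero, cosRem] using hasDerivAt_sin x
  | succ m ih =>
    rw [funext (sinRem_succ m), cosRem_succ]
    exact (hasDerivAt_pow_succ_div_factorial (2 * m) x).sub (ih x)

lemma hasDerivAt_cosRem_succ (m : ℕ) (x : ℝ) : HasDerivAt (cosRem (m + 1)) (sinRem m x) x := by
  induction m generalizing x with
  | zero =>
    simpa [funext (cosRem_succ 0), sinRem_zero, cosRem] using (hasDerivAt_cos x).const_sub 1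
  | succ m ih =>
    rw [funext (cosRem_succ (m + 1)), sinRem_succ]
    exact (hasDerivAt_pow_succ_div_factorial (2 * m + 1) x).sub (ih x)

lemma sinRem_apply_zero (m : ℕ) : sinRem m 0 = 0 := by
  induction m with
  | zero => simp [sinRem_zero]
  | succ m ih => simp [sinRem_succ, ih]

lemma cosRem_succ_apply_zero (m : ℕ) : cosRem (m + 1) 0 = 0 := by
  induction m with
  | zero => simp [cosRem]
  | succ m ih => simp [cosRem_succ (m + 1), ih]

lemma sinRem_pos_and_cosRem_pos (m : ℕ) :
    (∀ x, 0 < x → 0 < sinRem (m + 1) x) ∧ ∀ x, 0 < x → 0 < cosRem (m + 2) x := by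
  induction m with
  | zero =>
    have hsin : ∀ x, 0 < x → 0 < sinRem 1 x := fun x hx => by
      simpa [sinRem_succ, sinRem_zero] using sin_lt hx
    exact ⟨hsin, fun x => pos_of_hasDerivAt_of_pos_s7 (hasDerivAt_cosRem_succ 1)
      (cosRem_succ_apply_zero 1) hsin⟩
  | succ m ih =>
    have hsin : ∀ x, 0 < x → 0 < sinRem (m + 2) x := fun x =>
      pos_of_hasDerivAt_of_pos_s7 (hasDerivAt_sinRem (m + 2)) (sinRem_apply_zero _) ih.2
    exact ⟨hsin, fun x => pos_of_hasDerivAt_of_pos_s7 (hasDerivAt_cosRem_succ (m + 2))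
      (cosRem_succ_apply_zero _) hsin⟩

lemma sinRem_pos {m : ℕ} (hm : 1 ≤ m) {x : ℝ} (hx : 0 < x) : 0 < sinRem m x := by
  obtain ⟨k, rfl⟩ := Nat.exists_eq_add_of_le' hm
  exact (sinRem_pos_and_cosRem_pos k).1 x hx

lemma cosRem_pos {m : ℕ} (hm : 2 ≤ m) {x : ℝ} (hx : 0 < x) : 0 < cosRem m x := by
  obtain ⟨k, rfl⟩ := Nat.exists_eq_add_of_le' hm
  exact (sinRem_pos_and_cosRem_pos k).2 x hx

lemma mul_pow_add_two_div_factorial (k : ℕ) (x : ℝ) :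
    ((k + 1) * (k + 2) : ℝ) * (x ^ (k + 2) / (k + 2)!) = x ^ 2 * (x ^ k / k !) := by
  rw [Nat.factorial_succ, Nat.factorial_succ]
  push_cast
  field_simp
  ring

lemma mul_sinRem_succ_lt_sq_mul_sinRem {m : ℕ} (hm : 2 ≤ m) {x : ℝ} (hx : 0 < x) :
    2 * m * (2 * m + 1) * sinRem (m + 1) x < x ^ 2 * sinRem m x := by
  obtain ⟨k, rfl⟩ := Nat.exists_eq_add_of_le' hm
  set c : ℝ := 2 * (k + 2 : ℕ) * (2 * (k + 2 : ℕ) + 1)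
  have hu : ∀ t, HasDerivAt (fun t => t ^ 2 * sinRem (k + 2) t - c * sinRem (k + 3) t)
      (2 * t * sinRem (k + 2) t + t ^ 2 * cosRem (k + 2) t - c * cosRem (k + 3) t) t := fun t =>
    (((hasDerivAt_pow 2 t).mul (hasDerivAt_sinRem _ t)).sub
      ((hasDerivAt_sinRem _ t).const_mul c)).congr_deriv (by ring)
  have hu' : ∀ t, HasDerivAt
      (fun t => 2 * t * sinRem (k + 2) t + t ^ 2 * cosRem (k + 2) t - c * cosRem (k + 3) t)
      (2 * sinRem (k + 2) t + 4 * t * cosRem (k + 2) t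
        - (t ^ 2 * sinRem (k + 2) t - c * sinRem (k + 3) t)) t := by
    intro t
    -- `u'' + u = h` amounts to `t² (ρₖ₊₁ + ρₖ₊₂) = c (ρₖ₊₂ + ρₖ₊₃)`: both are `t^(2k+5)/(2k+3)!`.
    have hc := mul_pow_add_two_div_factorial (2 * (k + 1) + 1) t
    rw [show 2 * (k + 1) + 1 + 2 = 2 * (k + 2) + 1 by ring] at hc
    refine (((((hasDerivAt_id' t).const_mul 2).mul (hasDerivAt_sinRem _ t)).add
      ((hasDerivAt_pow 2 t).mul (hasDerivAt_cosRem_succ _ t))).sub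
      ((hasDerivAt_cosRem_succ _ t).const_mul c)).congr_deriv ?_
    rw [sinRem_succ (k + 2), sinRem_succ (k + 1)]
    simp only [c]
    push_cast at hc ⊢
    linear_combination -hc
  have hh : ∀ t, HasDerivAt (fun t => 2 * sinRem (k + 2) t + 4 * t * cosRem (k + 2) t)
      (6 * cosRem (k + 2) t + 4 * t * sinRem (k + 1) t) t := fun t =>
    (((hasDerivAt_sinRem _ t).const_mul 2).add (((hasDerivAt_id' t).const_mul 4).mul
      (hasDerivAt_cosRem_succ _ t))).congr_deriv (by ring)
  have hh' : ∀ t : ℝ, 0 < t → 0 < 6 * cosRem (k + 2) t + 4 * t * sinRem (k + 1) t := fun t ht => by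
    have hσ := cosRem_pos (by omega : 2 ≤ k + 2) ht
    have hρ := sinRem_pos (by omega : 1 ≤ k + 1) ht
    positivity
  have hu_pos := pos_of_hasDerivAt_deriv_add_self_eq hu hu' hh (by simp [sinRem_apply_zero])
    (by simp [sinRem_apply_zero, cosRem_succ_apply_zero (k + 2)]) (by simp [sinRem_apply_zero])
    hh' hx
  linarith

lemma sq_mul_sinRem_lt_mul_sinRem_succ {m : ℕ} (hm : 1 ≤ m) {x : ℝ} (hx : 0 < x) :
    x ^ 2 * sinRem m x < (2 * m + 2) * (2 * m + 3) * sinRem (m + 1) x := by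
  have hlow := mul_sinRem_succ_lt_sq_mul_sinRem (by omega : 2 ≤ m + 1) hx
  have hc := mul_pow_add_two_div_factorial (2 * m + 1) x
  rw [sinRem_succ (m + 1), show 2 * (m + 1) + 1 = 2 * m + 1 + 2 by ring] at hlow
  rw [sinRem_succ m] at hlow ⊢
  push_cast at hlow hc ⊢
  linear_combination hlow - hc

lemma Tsin_eq_sinRem (n : ℕ) {x : ℝ} (hx : x ≠ 0) :
    Tsin n x = (2 * n + 1)! * sinRem n x / x ^ (2 * n + 1) := by
  rw [Tsin, if_neg hx, sinRem]
  ring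

lemma Tsin_div_Tsin_succ (n : ℕ) {x : ℝ} (hx : x ≠ 0) :
    Tsin n x / Tsin (n + 1) x =
      x ^ 2 * sinRem n x / ((2 * n + 2) * (2 * n + 3) * sinRem (n + 1) x) := by
  have hfac : ((2 * (n + 1) + 1)! : ℝ) = (2 * n + 3) * (2 * n + 2) * (2 * n + 1)! := by
    rw [show 2 * (n + 1) + 1 = 2 * n + 1 + 1 + 1 by ring, Nat.factorial_succ, Nat.factorial_succ]
    push_cast
    ring
  rw [Tsin_eq_sinRem _ hx, Tsin_eq_sinRem _ hx, hfac]
  field_simp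
  ring

theorem Tsin_ratio_bounds (n : ℕ) (hn : 2 ≤ n) (x : ℝ) (hx : 0 < x) :
    ((n : ℝ) * (2 * n + 1)) / ((n + 1) * (2 * n + 3)) < Tsin n x / Tsin (n + 1) x ∧
    Tsin n x / Tsin (n + 1) x < 1 := by
  have hρ := sinRem_pos (by omega : 1 ≤ n + 1) hx
  have hlow := mul_sinRem_succ_lt_sq_mul_sinRem hn hx
  rw [Tsin_div_Tsin_succ n hx.ne', div_lt_div_iff₀ (by positivity) (by positivity),
    div_lt_one (by positivity)]
  have hpos : (0 : ℝ) < (n + 1) * (2 * n + 3) := by positivity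
  exact ⟨by nlinarith [mul_lt_mul_of_pos_right hlow hpos],
    sq_mul_sinRem_lt_mul_sinRem_succ (by omega) hx⟩
end

section
/- For every natural number n, the function R defined by R x = (ln (E n x))/x for x ≠ 0 and R 0 = 1/(n+2) is increasing on all of ℝ. -/
/-!
For `x ≠ 0`, Taylor's formula with integral remainder gives
`E n x = (n + 1) ∫₀¹ (1 - t)ⁿ e^{xt} dt`, i.e. `E n` is the moment generating function of the
Beta(1, n + 1) distribution, whose mean is `1 / (n + 2)`. So `log (E n x) / x` is the slope of a
cumulant generating function `K` at `0`, where `K 0 = 0`. By Hölder's inequality `K` is convex,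
so its slopes at `0` increase, and by Jensen's inequality `K x ≥ x / (n + 2)`, so `1 / (n + 2)`
fits between the slopes on the left and on the right of `0`.
-/

/-- The `n`-th normalized remainder of the Maclaurin series of the exponential. -/
noncomputable def E (n : ℕ) (x : ℝ) : ℝ :=
  if x = 0 then 1
  else (Nat.factorial (n + 1)) / x ^ (n + 1) *
    (Real.exp x - ∑ k ∈ Finset.range (n + 1), x ^ k / (Nat.factorial k))

open MeasureTheory ProbabilityTheory Real Set

namespace ProbabilityTheory

section CumulantGeneratingFunction

variable {Ω : Type*} [MeasurableSpace Ω] {μ : Measure Ω} {X : Ω → ℝ}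

lemma ofReal_mgf_eq_lintegral {t : ℝ} (ht : t ∈ integrableExpSet X μ) :
    ENNReal.ofReal (mgf X μ t) = ∫⁻ ω, ENNReal.ofReal (exp (t * X ω)) ∂μ :=
  ofReal_integral_eq_lintegral_ofReal ht (.of_forall fun _ => (exp_pos _).le)

lemma mgf_mul_add_mul_le_rpow_mul_rpow {x y a b : ℝ} (hx : x ∈ integrableExpSet X μ)
    (hy : y ∈ integrableExpSet X μ) (ha : 0 ≤ a) (hb : 0 ≤ b) (hab : a + b = 1) :
    mgf X μ (a * x + b * y) ≤ mgf X μ x ^ a * mgf X μ y ^ b := by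
  have hxy : a * x + b * y ∈ integrableExpSet X μ := convex_integrableExpSet hx hy ha hb hab
  have hexp (ω : Ω) : ENNReal.ofReal (exp ((a * x + b * y) * X ω)) =
      ENNReal.ofReal (exp (x * X ω)) ^ a * ENNReal.ofReal (exp (y * X ω)) ^ b := by
    rw [ENNReal.ofReal_rpow_of_nonneg (exp_pos _).le ha,
      ENNReal.ofReal_rpow_of_nonneg (exp_pos _).le hb, ← ENNReal.ofReal_mul (by positivity),
      ← exp_mul, ← exp_mul, ← exp_add]
    ring_nf
  have holder :
      ∫⁻ ω, ENNReal.ofReal (exp (x * X ω)) ^ a * ENNReal.ofReal (exp (y * X ω)) ^ b ∂μ ≤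
        (∫⁻ ω, ENNReal.ofReal (exp (x * X ω)) ∂μ) ^ a *
          (∫⁻ ω, ENNReal.ofReal (exp (y * X ω)) ∂μ) ^ b :=
    ENNReal.lintegral_mul_norm_pow_le hx.1.aemeasurable.ennreal_ofReal
      hy.1.aemeasurable.ennreal_ofReal ha hb hab
  simp only [← hexp, ← ofReal_mgf_eq_lintegral hx, ← ofReal_mgf_eq_lintegral hy,
    ← ofReal_mgf_eq_lintegral hxy] at holder
  have hpow (t c : ℝ) : 0 ≤ mgf X μ t ^ c := rpow_nonneg mgf_nonneg c
  rwa [ENNReal.ofReal_rpow_of_nonneg mgf_nonneg ha,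
    ENNReal.ofReal_rpow_of_nonneg mgf_nonneg hb, ← ENNReal.ofReal_mul (hpow x a),
    ENNReal.ofReal_le_ofReal_iff (mul_nonneg (hpow x a) (hpow y b))] at holder

lemma convexOn_cgf [NeZero μ] : ConvexOn ℝ (integrableExpSet X μ) (cgf X μ) := by
  refine ⟨convex_integrableExpSet, fun x hx y hy a b ha hb hab => ?_⟩
  have hmgf {t : ℝ} (ht : t ∈ integrableExpSet X μ) : 0 < mgf X μ t := mgf_pos' (NeZero.ne μ) ht
  calc cgf X μ (a • x + b • y) = log (mgf X μ (a * x + b * y)) := rfl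
    _ ≤ log (mgf X μ x ^ a * mgf X μ y ^ b) :=
      log_le_log (hmgf (convex_integrableExpSet hx hy ha hb hab))
        (mgf_mul_add_mul_le_rpow_mul_rpow hx hy ha hb hab)
    _ = a • cgf X μ x + b • cgf X μ y := by
      rw [log_mul (by positivity [hmgf hx]) (by positivity [hmgf hy]), log_rpow (hmgf hx),
        log_rpow (hmgf hy)]
      rfl

lemma mul_integral_le_cgf [IsProbabilityMeasure μ] {t : ℝ} (hX : Integrable X μ)
    (ht : Integrable (fun ω => exp (t * X ω)) μ) : t * μ[X] ≤ cgf X μ t := by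
  rw [cgf, le_log_iff_exp_le (mgf_pos ht), ← integral_const_mul]
  exact convexOn_exp.map_integral_le continuousOn_exp isClosed_univ (.of_forall fun _ => trivial)
    (hX.const_mul t) ht

theorem monotone_cgf_div [IsProbabilityMeasure μ]
    (h : ∀ t, Integrable (fun ω => exp (t * X ω)) μ) :
    Monotone (fun t => if t = 0 then μ[X] else cgf X μ t / t) := by
  have hset : integrableExpSet X μ = univ := eq_univ_of_forall h
  have hX : Integrable X μ := integrable_of_mem_interior_integrableExpSet (by simp [hset])
  intro x y hxy
  rcases eq_or_ne x 0 with rfl | hx <;> rcases eq_or_ne y 0 with rfl | hy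
  · rfl
  · simp only [↓reduceIte, if_neg hy]
    rw [le_div_iff₀ (lt_of_le_of_ne hxy (Ne.symm hy)), mul_comm]
    exact mul_integral_le_cgf hX (h y)
  · simp only [↓reduceIte, if_neg hx]
    rw [div_le_iff_of_neg (lt_of_le_of_ne hxy hx), mul_comm]
    exact mul_integral_le_cgf hX (h x)
  · simp only [if_neg hx, if_neg hy]
    have := (hset ▸ convexOn_cgf (X := X) (μ := μ)).secant_mono (mem_univ 0) (mem_univ x)
      (mem_univ y) hx hy hxy
    simpa [cgf_zero] using this

end CumulantGeneratingFunction

lemma beta_one_left {b : ℝ} (hb : 0 < b) : beta 1 b = 1 / b := by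
  rw [beta, Gamma_one, one_mul, add_comm, Gamma_add_one hb.ne',
    div_mul_cancel_right₀ (Gamma_pos_of_pos hb).ne', one_div]

lemma betaPDFReal_one_left {b x : ℝ} (hb : 0 < b) (hx : x ∈ Ioo 0 1) :
    betaPDFReal 1 b x = b * (1 - x) ^ (b - 1) := by
  rw [betaPDFReal, if_pos ⟨hx.1, hx.2⟩, beta_one_left hb, sub_self, rpow_zero, mul_one,
    one_div_one_div]

lemma measurable_betaPDF (α β : ℝ) : Measurable (betaPDF α β) :=
  (measurable_betaPDFReal α β).ennreal_ofReal

lemma ae_mem_Ioo_betaMeasure (α β : ℝ) : ∀ᵐ x ∂betaMeasure α β, x ∈ Ioo 0 1 := by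
  rw [betaMeasure, ae_withDensity_iff (measurable_betaPDF α β)]
  refine .of_forall fun x hx => ⟨?_, ?_⟩
  · exact not_le.1 fun h => hx (betaPDF_eq_zero_of_nonpos h)
  · exact not_le.1 fun h => hx (betaPDF_eq_zero_of_one_le h)

lemma integral_betaMeasure {α β : ℝ} (hα : 0 < α) (hβ : 0 < β) (g : ℝ → ℝ) :
    ∫ x, g x ∂betaMeasure α β = ∫ x in Ioo 0 1, betaPDFReal α β x * g x := by
  rw [betaMeasure, _root_.integral_withDensity_eq_integral_toReal_smul (measurable_betaPDF α β)
    (.of_forall fun _ => ENNReal.ofReal_lt_top),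
    ← setIntegral_eq_integral_of_forall_compl_eq_zero (s := Ioo 0 1) fun x hx => ?_]
  · refine setIntegral_congr_fun measurableSet_Ioo fun x hx => ?_
    rw [betaPDF, ENNReal.toReal_ofReal (betaPDFReal_pos hx.1 hx.2 hα hβ).le, smul_eq_mul]
  · rw [betaPDF, betaPDFReal, if_neg (show ¬(0 < x ∧ x < 1) from hx), ENNReal.ofReal_zero,
      ENNReal.toReal_zero, zero_smul]

lemma integral_betaMeasure_one_natCast_add_one (n : ℕ) (g : ℝ → ℝ) :
    ∫ x, g x ∂betaMeasure 1 (n + 1) = (n + 1) * ∫ x in 0..1, (1 - x) ^ n * g x := by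
  rw [integral_betaMeasure one_pos (by positivity), intervalIntegral.integral_of_le zero_le_one,
    integral_Ioc_eq_integral_Ioo, ← integral_const_mul]
  refine setIntegral_congr_fun measurableSet_Ioo fun x hx => ?_
  rw [betaPDFReal_one_left (by positivity) hx, add_sub_cancel_right, rpow_natCast, mul_assoc]

lemma integrable_exp_mul_betaMeasure {α β : ℝ} (hα : 0 < α) (hβ : 0 < β) (t : ℝ) :
    Integrable (fun x => exp (t * x)) (betaMeasure α β) := by
  have := isProbabilityMeasureBeta hα hβ
  refine .of_bound (by fun_prop) (exp |t|) ?_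
  filter_upwards [ae_mem_Ioo_betaMeasure α β] with x hx
  rw [norm_of_nonneg (exp_pos _).le, exp_le_exp]
  calc t * x ≤ |t| * x := mul_le_mul_of_nonneg_right (le_abs_self t) hx.1.le
    _ ≤ |t| := mul_le_of_le_one_right (abs_nonneg t) hx.2.le

lemma integral_id_betaMeasure_one_natCast_add_one (n : ℕ) :
    ∫ x, id x ∂betaMeasure 1 (n + 1) = 1 / (n + 2) := by
  have hint : ∫ x in 0..1, (1 - x) ^ n * id x = ∫ x in 0..1, ((1 - x) ^ n - (1 - x) ^ (n + 1)) :=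
    intervalIntegral.integral_congr fun x _ => by simp only [id, pow_succ]; ring
  rw [integral_betaMeasure_one_natCast_add_one, hint,
    intervalIntegral.integral_sub ((by fun_prop : Continuous _).intervalIntegrable _ _)
      ((by fun_prop : Continuous _).intervalIntegrable _ _),
    intervalIntegral.integral_comp_sub_left (fun x => x ^ n),
    intervalIntegral.integral_comp_sub_left (fun x => x ^ (n + 1)), sub_self, sub_zero,
    integral_pow, integral_pow]
  field_simp
  push_cast
  ring

end ProbabilityTheory

lemma exp_sub_sum_range_eq_integral (n : ℕ) (x : ℝ) :
    exp x - ∑ k ∈ Finset.range (n + 1), x ^ k / k.factorial =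
      x ^ (n + 1) / n.factorial * ∫ t in 0..1, (1 - t) ^ n * exp (x * t) := by
  have taylor := map_add_eq_sum_add_integral_iteratedFDeriv (f := exp) (x := 0) (y := x) (n := n)
    fun _ _ => contDiff_exp.contDiffAt
  simp only [iteratedFDeriv_apply_eq_iteratedDeriv_mul_prod, iteratedDeriv_eq_iterate,
    iter_deriv_exp, Finset.prod_const, Finset.card_univ, Fintype.card_fin, smul_eq_mul,
    zero_add, exp_zero, mul_one, inv_mul_eq_div] at taylor
  rw [taylor, add_sub_cancel_left, div_mul_eq_mul_div, ← intervalIntegral.integral_const_mul]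
  congr 1
  refine intervalIntegral.integral_congr fun t _ => ?_
  simp only [mul_comm t x]
  ring

lemma E_eq_mgf (n : ℕ) (x : ℝ) : E n x = mgf id (betaMeasure 1 (n + 1)) x := by
  have := isProbabilityMeasureBeta one_pos (by positivity : (0 : ℝ) < n + 1)
  rcases eq_or_ne x 0 with rfl | hx
  · rw [mgf_zero, E, if_pos rfl]
  · rw [E, if_neg hx, exp_sub_sum_range_eq_integral, mgf,
      integral_betaMeasure_one_natCast_add_one, ← mul_assoc]
    congr 1
    rw [Nat.factorial_succ]
    push_cast
    field_simp

theorem log_E_div_monotone (n : ℕ) :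
    Monotone (fun x : ℝ => if x = 0 then (1 : ℝ) / (n + 2) else Real.log (E n x) / x) := by
  have hβ : (0 : ℝ) < n + 1 := by positivity
  have := isProbabilityMeasureBeta one_pos hβ
  have hmono := monotone_cgf_div (X := id) (μ := betaMeasure 1 (n + 1))
    (integrable_exp_mul_betaMeasure one_pos hβ)
  rw [integral_id_betaMeasure_one_natCast_add_one] at hmono
  simpa only [cgf, ← E_eq_mgf] using hmono
end
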